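/- arXiv:1005.2248 — 3 statements merged into one kernel-verified Lean document; each statement's English description precedes it below -/
import Mathlib

section
/- The complete graph K₅ has exactly six proper 5-edge-colourings up to permutation of the colours, and no proper 5-edge-colouring of K₅ admits a nontrivial Kempe change; consequently the number of Kempe equivalence classes of proper 5-edge-colourings of K₅ is exactly 6, i.e. κ_E(K₅, 5) = 6. -/
open SimpleGraph

/-- A proper `k`-edge-colouring of `G`: distinct edges sharing a vertex receive
different colours. -/
def IsProperEdgeColoring {V : Type*} (G : SimpleGraph V) (k : ℕ)
    (φ : G.edgeSet → Fin k) : Prop :=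
  ∀ e₁ e₂ : G.edgeSet, e₁ ≠ e₂ →
    (∃ v : V, v ∈ (e₁ : Sym2 V) ∧ v ∈ (e₂ : Sym2 V)) → φ e₁ ≠ φ e₂

/-- The spanning subgraph of `G` consisting of the edges coloured `a` or `b` under `φ`. -/
def kempeGraph {V : Type*} (G : SimpleGraph V) {k : ℕ} (φ : G.edgeSet → Fin k)
    (a b : Fin k) : SimpleGraph V where
  Adj u v := ∃ h : G.Adj u v, φ ⟨s(u, v), h⟩ = a ∨ φ ⟨s(u, v), h⟩ = b
  symm := by
    constructor
    rintro u v ⟨h, hc⟩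
    refine ⟨h.symm, ?_⟩
    have he : (⟨s(v, u), h.symm⟩ : G.edgeSet) = ⟨s(u, v), h⟩ :=
      Subtype.ext (Sym2.eq_swap)
    rw [he]
    exact hc
  loopless := by
    constructor
    rintro v ⟨h, _⟩
    exact G.loopless.irrefl v h

/-- The edge `e` lies in the Kempe chain determined by the colours `a, b` and the
connected component of the vertex `w` in the `(a,b)`-subgraph. -/
def InKempeChain {V : Type*} (G : SimpleGraph V) {k : ℕ} (φ : G.edgeSet → Fin k)
    (a b : Fin k) (w : V) (e : G.edgeSet) : Prop :=
  (φ e = a ∨ φ e = b) ∧ ∃ u ∈ (e : Sym2 V), (kempeGraph G φ a b).Reachable w u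

/-- `ψ` is obtained from `φ` by a single Kempe change: the colours `a` and `b` are
swapped on one connected component of the subgraph induced by the edges coloured
`a` or `b`, and all other edges keep their colour. -/
def KempeChange {V : Type*} (G : SimpleGraph V) (k : ℕ)
    (φ ψ : G.edgeSet → Fin k) : Prop :=
  ∃ (a b : Fin k) (w : V), ∀ e : G.edgeSet,
    (InKempeChain G φ a b w e → ψ e = Equiv.swap a b (φ e)) ∧
    (¬ InKempeChain G φ a b w e → ψ e = φ e)

/-- Kempe equivalence: `ψ` is obtained from `φ` by a finite sequence of Kempe changes. -/
def KempeEquiv {V : Type*} (G : SimpleGraph V) (k : ℕ)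
    (φ ψ : G.edgeSet → Fin k) : Prop :=
  Relation.ReflTransGen (KempeChange G k) φ ψ

/-- Two edge-colourings differ only by a permutation of the colour set. -/
def PermRelated {V : Type*} (G : SimpleGraph V) (k : ℕ)
    (φ ψ : G.edgeSet → Fin k) : Prop :=
  ∃ σ : Equiv.Perm (Fin k), ∀ e : G.edgeSet, ψ e = σ (φ e)

/-- Kempe equivalence with colourings differing by a permutation of colours identified. -/
def KempePermEquiv {V : Type*} (G : SimpleGraph V) (k : ℕ)
    (φ ψ : G.edgeSet → Fin k) : Prop :=
  ∃ ψ' : G.edgeSet → Fin k, PermRelated G k ψ ψ' ∧ KempeEquiv G k φ ψ'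

/-! Normalising the colours on the four edges at vertex `0` to `0, 1, 2, 3` leaves a finite
search with exactly six completions, so every proper 5-edge-colouring of `K₅` is a recolouring of
one of six canonical colourings, and no two of these are recolourings of each other. In a canonical
colouring any two colour classes form a Hamiltonian path, so a Kempe chain is always a whole
two-coloured subgraph and a Kempe change merely swaps two colours everywhere. Hence Kempe changes
never leave a permutation class, and the six permutation classes are the Kempe classes. -/

section Kempe

variable {V : Type*} {G : SimpleGraph V} {k : ℕ} {φ ψ χ : G.edgeSet → Fin k}

instance [DecidableRel G.Adj] {a b : Fin k} : DecidableRel (kempeGraph G φ a b).Adj :=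
  fun _ _ => by unfold kempeGraph; infer_instance

theorem PermRelated.refl (φ : G.edgeSet → Fin k) : PermRelated G k φ φ :=
  ⟨1, fun _ => rfl⟩

theorem PermRelated.symm (h : PermRelated G k φ ψ) : PermRelated G k ψ φ := by
  obtain ⟨σ, hσ⟩ := h
  exact ⟨σ.symm, fun e => by rw [hσ, Equiv.symm_apply_apply]⟩

theorem PermRelated.trans (h₁ : PermRelated G k φ ψ) (h₂ : PermRelated G k ψ χ) :
    PermRelated G k φ χ := by
  obtain ⟨σ, hσ⟩ := h₁
  obtain ⟨τ, hτ⟩ := h₂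
  exact ⟨τ * σ, fun e => by rw [hτ, hσ, Equiv.Perm.mul_apply]⟩

theorem PermRelated.apply_eq_apply_iff (h : PermRelated G k φ ψ) (e₁ e₂ : G.edgeSet) :
    ψ e₁ = ψ e₂ ↔ φ e₁ = φ e₂ := by
  obtain ⟨σ, hσ⟩ := h
  rw [hσ, hσ, σ.apply_eq_iff_eq]

theorem IsProperEdgeColoring.of_permRelated (hφ : IsProperEdgeColoring G k φ)
    (h : PermRelated G k φ ψ) : IsProperEdgeColoring G k ψ := fun e₁ e₂ hne hmeet heq =>
  hφ e₁ e₂ hne hmeet ((h.apply_eq_apply_iff e₁ e₂).1 heq)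

theorem kempeGraph_eq_of_apply_eq {σ : Equiv.Perm (Fin k)} (h : ∀ e, ψ e = σ (φ e))
    (a b : Fin k) : kempeGraph G ψ a b = kempeGraph G φ (σ.symm a) (σ.symm b) := by
  ext u v
  simp only [kempeGraph, h, ← Equiv.eq_symm_apply]

theorem PermRelated.kempeGraph_preconnected (h : PermRelated G k φ ψ)
    (hφ : ∀ a b, a ≠ b → (kempeGraph G φ a b).Preconnected) {a b : Fin k} (hab : a ≠ b) :
    (kempeGraph G ψ a b).Preconnected := by
  obtain ⟨σ, hσ⟩ := h
  rw [kempeGraph_eq_of_apply_eq hσ]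
  exact hφ _ _ (σ.symm.injective.ne hab)

/-- Each Kempe chain is then the whole `(a, b)`-subgraph, so the change swaps `a` and `b`
everywhere. -/
theorem KempeChange.permRelated_of_preconnected
    (hφ : ∀ a b, a ≠ b → (kempeGraph G φ a b).Preconnected) (h : KempeChange G k φ ψ) :
    PermRelated G k φ ψ := by
  obtain ⟨a, b, w, hchange⟩ := h
  refine ⟨Equiv.swap a b, fun e => ?_⟩
  by_cases hin : InKempeChain G φ a b w e
  · exact (hchange e).1 hin
  rw [(hchange e).2 hin]
  obtain rfl | hab := eq_or_ne a b
  · rw [Equiv.swap_self, Equiv.refl_apply]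
  have hcol : ¬(φ e = a ∨ φ e = b) := fun hcol =>
    hin ⟨hcol, _, Sym2.out_fst_mem (e : Sym2 V), hφ a b hab w _⟩
  obtain ⟨hne_a, hne_b⟩ := not_or.1 hcol
  rw [Equiv.swap_apply_of_ne_of_ne hne_a hne_b]

theorem KempeEquiv.permRelated
    (hchange : ∀ φ ψ, IsProperEdgeColoring G k φ → KempeChange G k φ ψ →
      PermRelated G k φ ψ)
    (hφ : IsProperEdgeColoring G k φ) (h : KempeEquiv G k φ ψ) : PermRelated G k φ ψ := by
  induction h with
  | refl => exact PermRelated.refl φ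
  | tail _ hstep ih => exact ih.trans (hchange _ _ (hφ.of_permRelated ih) hstep)

theorem KempePermEquiv.permRelated
    (hchange : ∀ φ ψ, IsProperEdgeColoring G k φ → KempeChange G k φ ψ →
      PermRelated G k φ ψ)
    (hφ : IsProperEdgeColoring G k φ) (h : KempePermEquiv G k φ ψ) : PermRelated G k φ ψ := by
  obtain ⟨ψ', hψ', hequiv⟩ := h
  exact (hequiv.permRelated hchange hφ).trans hψ'.symm

theorem PermRelated.kempePermEquiv (h : PermRelated G k φ ψ) : KempePermEquiv G k φ ψ :=
  ⟨φ, h.symm, Relation.ReflTransGen.refl⟩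

end Kempe

abbrev K₅ : SimpleGraph (Fin 5) := completeGraph (Fin 5)

namespace K₅

def edges : Fin 10 → Sym2 (Fin 5) :=
  ![s(0, 1), s(0, 2), s(0, 3), s(0, 4), s(1, 2), s(1, 3), s(1, 4), s(2, 3), s(2, 4), s(3, 4)]

/-- `edgeIndex u v` is the position of `s(u, v)` in `edges` (junk on the diagonal). -/
def edgeIndex : Fin 5 → Fin 5 → Fin 10 :=
  ![![0, 0, 1, 2, 3], ![0, 0, 4, 5, 6], ![1, 4, 0, 7, 8], ![2, 5, 7, 0, 9], ![3, 6, 8, 9, 0]]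

theorem edgeIndex_comm (u v : Fin 5) : edgeIndex u v = edgeIndex v u := by
  revert u v; decide

def edgeEquiv : Fin 10 ≃ K₅.edgeSet where
  toFun i := ⟨edges i, by revert i; decide⟩
  invFun e := Sym2.lift ⟨edgeIndex, edgeIndex_comm⟩ e
  left_inv := by decide
  right_inv := by decide

theorem coe_edgeEquiv (i : Fin 10) : (edgeEquiv i : Sym2 (Fin 5)) = edges i := rfl

def incident : Fin 5 → List (Fin 10) :=
  ![[0, 1, 2, 3], [0, 4, 5, 6], [1, 4, 7, 8], [2, 5, 7, 9], [3, 6, 8, 9]]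

theorem nodup_incident : ∀ u, (incident u).Nodup := by decide

theorem mem_incident_iff : ∀ u i, i ∈ incident u ↔ u ∈ edges i := by decide

def IsProperTable (f : Fin 10 → Fin 5) : Prop :=
  ∀ u, ((incident u).map f).Nodup

instance : DecidablePred IsProperTable :=
  fun f => inferInstanceAs (Decidable (∀ u, ((incident u).map f).Nodup))

theorem isProperEdgeColoring_iff {φ : K₅.edgeSet → Fin 5} :
    IsProperEdgeColoring K₅ 5 φ ↔ IsProperTable (φ ∘ edgeEquiv) := by
  constructor
  · refine fun hφ u => (nodup_incident u).map_on fun i hi j hj heq => ?_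
    by_contra hij
    refine hφ _ _ (edgeEquiv.injective.ne hij) ⟨u, ?_, ?_⟩ heq
    · rwa [coe_edgeEquiv, ← mem_incident_iff]
    · rwa [coe_edgeEquiv, ← mem_incident_iff]
  · rintro hφ e₁ e₂ hne ⟨u, h₁, h₂⟩ heq
    refine hne (edgeEquiv.symm.injective (List.inj_on_of_nodup_map (hφ u) ?_ ?_ ?_))
    · rwa [mem_incident_iff, ← coe_edgeEquiv, Equiv.apply_symm_apply]
    · rwa [mem_incident_iff, ← coe_edgeEquiv, Equiv.apply_symm_apply]
    · simpa using heq

def canonicalTable : Fin 6 → Fin 10 → Fin 5 :=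
  ![![0, 1, 2, 3, 2, 3, 4, 4, 0, 1],
    ![0, 1, 2, 3, 2, 4, 1, 3, 4, 0],
    ![0, 1, 2, 3, 3, 1, 4, 4, 2, 0],
    ![0, 1, 2, 3, 3, 4, 2, 0, 4, 1],
    ![0, 1, 2, 3, 4, 1, 2, 3, 0, 4],
    ![0, 1, 2, 3, 4, 3, 1, 0, 2, 4]]

def canonical (t : Fin 6) : K₅.edgeSet → Fin 5 := canonicalTable t ∘ edgeEquiv.symm

theorem isProperEdgeColoring_canonical (t : Fin 6) : IsProperEdgeColoring K₅ 5 (canonical t) := by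
  rw [isProperEdgeColoring_iff, canonical, Function.comp_assoc, Equiv.symm_comp_self,
    Function.comp_id]
  revert t; decide

theorem eq_canonicalTable_of_isProperTable {f : Fin 10 → Fin 5} (hf : IsProperTable f)
    (h₀ : f 0 = 0) (h₁ : f 1 = 1) (h₂ : f 2 = 2) (h₃ : f 3 = 3) :
    ∃ t, f = canonicalTable t := by
  -- one constraint per vertex `1, …, 4`, placed early so that the search prunes
  have search : ∀ d₄ d₅ d₆ : Fin 5, [0, d₄, d₅, d₆].Nodup →
      ∀ d₇ d₈ : Fin 5, [1, d₄, d₇, d₈].Nodup →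
      ∀ d₉ : Fin 5, [2, d₅, d₇, d₉].Nodup → [3, d₆, d₈, d₉].Nodup →
      ∃ t, ![0, 1, 2, 3, d₄, d₅, d₆, d₇, d₈, d₉] = canonicalTable t := by
    decide +kernel
  have hf_eq : f = ![0, 1, 2, 3, f 4, f 5, f 6, f 7, f 8, f 9] := by
    funext i; fin_cases i <;> simp [h₀, h₁, h₂, h₃]
  rw [hf_eq]
  have hv₁ : [0, f 4, f 5, f 6].Nodup := h₀ ▸ hf 1
  have hv₂ : [1, f 4, f 7, f 8].Nodup := h₁ ▸ hf 2
  have hv₃ : [2, f 5, f 7, f 9].Nodup := h₂ ▸ hf 3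
  have hv₄ : [3, f 6, f 8, f 9].Nodup := h₃ ▸ hf 4
  exact search _ _ _ hv₁ _ _ hv₂ _ hv₃ hv₄

theorem exists_permRelated_canonical {ψ : K₅.edgeSet → Fin 5}
    (hψ : IsProperEdgeColoring K₅ 5 ψ) : ∃ t, PermRelated K₅ 5 (canonical t) ψ := by
  set f := ψ ∘ edgeEquiv
  have hf : IsProperTable f := isProperEdgeColoring_iff.1 hψ
  have hstar : Function.Injective fun i : Fin 4 => f (Fin.castLE (by norm_num) i) := by
    rw [← List.nodup_ofFn]; exact hf 0
  obtain ⟨σ, hσ⟩ := Equiv.Perm.exists_extending_pair _ _ hstar (Fin.castSucc_injective 4)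
  have hσf : IsProperTable (σ ∘ f) := fun u => by
    rw [← List.map_map]; exact (hf u).map σ.injective
  obtain ⟨t, ht⟩ := eq_canonicalTable_of_isProperTable hσf (hσ 0) (hσ 1) (hσ 2) (hσ 3)
  refine ⟨t, σ.symm, fun e => ?_⟩
  rw [canonical, ← ht]
  simp [f]

theorem canonical_separated : ∀ i j : Fin 6, i ≠ j → ∃ k₁ k₂,
    canonicalTable i k₁ = canonicalTable i k₂ ∧ canonicalTable j k₁ ≠ canonicalTable j k₂ := by
  decide

theorem not_permRelated_canonical {i j : Fin 6} (hij : i ≠ j) :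
    ¬ PermRelated K₅ 5 (canonical i) (canonical j) := by
  intro h
  obtain ⟨k₁, k₂, hi, hj⟩ := canonical_separated i j hij
  have hsame := h.apply_eq_apply_iff (edgeEquiv k₁) (edgeEquiv k₂)
  simp only [canonical, Function.comp_apply, Equiv.symm_apply_apply] at hsame
  exact hj (hsame.2 hi)

theorem kempeGraph_canonical_preconnected (t : Fin 6) {a b : Fin 5} (hab : a ≠ b) :
    (kempeGraph K₅ (canonical t) a b).Preconnected := by
  set H := kempeGraph K₅ (canonical t) a b
  -- each two-coloured subgraph is a Hamiltonian path, so all vertices are within four steps of `0`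
  have hpaths : ∀ v, ∃ x y z, (0 = x ∨ H.Adj 0 x) ∧ (x = y ∨ H.Adj x y) ∧
      (y = z ∨ H.Adj y z) ∧ (z = v ∨ H.Adj z v) := by
    revert t a b; decide +kernel
  have reach {x y : Fin 5} : x = y ∨ H.Adj x y → H.Reachable x y := by
    rintro (rfl | hxy)
    exacts [.refl x, hxy.reachable]
  have from_zero (v : Fin 5) : H.Reachable 0 v := by
    obtain ⟨x, y, z, h₁, h₂, h₃, h₄⟩ := hpaths v
    exact (reach h₁).trans ((reach h₂).trans ((reach h₃).trans (reach h₄)))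
  exact fun u v => (from_zero u).symm.trans (from_zero v)

theorem kempeGraph_preconnected {φ : K₅.edgeSet → Fin 5} (hφ : IsProperEdgeColoring K₅ 5 φ)
    {a b : Fin 5} (hab : a ≠ b) : (kempeGraph K₅ φ a b).Preconnected := by
  obtain ⟨t, ht⟩ := exists_permRelated_canonical hφ
  exact ht.kempeGraph_preconnected (fun _ _ => kempeGraph_canonical_preconnected t) hab

theorem permRelated_of_kempeChange {φ ψ : K₅.edgeSet → Fin 5}
    (hφ : IsProperEdgeColoring K₅ 5 φ) (h : KempeChange K₅ 5 φ ψ) : PermRelated K₅ 5 φ ψ :=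
  h.permRelated_of_preconnected fun _ _ => kempeGraph_preconnected hφ

end K₅

/-- **Proposition.** `K₅` has exactly six proper 5-edge-colourings up to permutation of
the colours; no proper 5-edge-colouring of `K₅` admits a nontrivial Kempe change (every
Kempe change produces a colouring differing only by a permutation of the colours);
consequently, the number of Kempe equivalence classes of proper 5-edge-colourings of
`K₅` (colourings differing by a permutation of colours being identified) is exactly 6,
i.e. `κ_E(K₅, 5) = 6`. -/
theorem kappa_K5_eq_six :
    (∃ φs : Fin 6 → ((completeGraph (Fin 5)).edgeSet → Fin 5),
      (∀ i, IsProperEdgeColoring (completeGraph (Fin 5)) 5 (φs i)) ∧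
      (∀ i j, i ≠ j → ¬ PermRelated (completeGraph (Fin 5)) 5 (φs i) (φs j)) ∧
      (∀ ψ : (completeGraph (Fin 5)).edgeSet → Fin 5,
        IsProperEdgeColoring (completeGraph (Fin 5)) 5 ψ →
          ∃ i, PermRelated (completeGraph (Fin 5)) 5 (φs i) ψ)) ∧
    (∀ φ ψ : (completeGraph (Fin 5)).edgeSet → Fin 5,
      IsProperEdgeColoring (completeGraph (Fin 5)) 5 φ →
      KempeChange (completeGraph (Fin 5)) 5 φ ψ →
        PermRelated (completeGraph (Fin 5)) 5 φ ψ) ∧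
    (∃ φs : Fin 6 → ((completeGraph (Fin 5)).edgeSet → Fin 5),
      (∀ i, IsProperEdgeColoring (completeGraph (Fin 5)) 5 (φs i)) ∧
      (∀ i j, i ≠ j → ¬ KempePermEquiv (completeGraph (Fin 5)) 5 (φs i) (φs j)) ∧
      (∀ ψ : (completeGraph (Fin 5)).edgeSet → Fin 5,
        IsProperEdgeColoring (completeGraph (Fin 5)) 5 ψ →
          ∃ i, KempePermEquiv (completeGraph (Fin 5)) 5 (φs i) ψ)) := by
  refine ⟨⟨K₅.canonical, K₅.isProperEdgeColoring_canonical,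
      fun _ _ => K₅.not_permRelated_canonical, fun _ => K₅.exists_permRelated_canonical⟩,
    fun _ _ => K₅.permRelated_of_kempeChange,
    ⟨K₅.canonical, K₅.isProperEdgeColoring_canonical, fun i j hij h => ?_, fun ψ hψ => ?_⟩⟩
  · exact K₅.not_permRelated_canonical hij
      (h.permRelated (fun _ _ => K₅.permRelated_of_kempeChange)
        (K₅.isProperEdgeColoring_canonical i))
  · obtain ⟨t, ht⟩ := K₅.exists_permRelated_canonical hψ
    exact ⟨t, ht.kempePermEquiv⟩
end

section
/- In every proper 5-edge-colouring of the complete graph K₅, every colour class has size exactly two, each colour is missing at exactly one vertex, and the union of any two colour classes forms a Hamiltonian path of K₅. In particular, no nontrivial Kempe change can be performed on any proper 5-edge-colouring of K₅. -/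
open SimpleGraph

/-!
A colour class of a proper edge-colouring is a matching, so in `K₅` it has at most two of the
ten edges; hence every class has exactly two edges and misses exactly one vertex, and since every
vertex has degree four it misses exactly one colour. For colours `a ≠ b` let `σ`, `τ` send a
vertex to the other end of its `a`-, resp. `b`-edge (fixing the vertex that misses the colour).
These are involutions with distinct fixed points that never agree, and on five points the
alternating sequence `x, τ x, σ (τ x), …` from the fixed point `x` of `σ` runs through all
vertices: a Hamiltonian path whose four edges are exactly the `a`- and `b`-edges. So every
`(a, b)`-subgraph is connected and each Kempe change swaps `a` and `b` everywhere.
-/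

open Function

lemma ncard_fiber_eq_of_forall_le {α β : Type*} [Fintype α] [Fintype β] [DecidableEq β]
    {f : α → β} {m : ℕ} (hle : ∀ b, {a | f a = b}.ncard ≤ m)
    (hcard : Fintype.card α = Fintype.card β * m) (b : β) : {a | f a = b}.ncard = m := by
  have hfib : ∀ b, {a | f a = b}.ncard = (Finset.univ.filter (f · = b)).card := fun b => by
    rw [← Set.ncard_coe_finset]; simp
  simp only [hfib] at hle ⊢
  have hsum : ∑ b, (Finset.univ.filter (f · = b)).card = ∑ _b : β, m := by
    rw [← Finset.card_eq_sum_card_fiberwise (fun _ _ => Finset.mem_univ _)]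
    simp [hcard]
  exact (Finset.sum_eq_sum_iff_of_le fun b _ => hle b).mp hsum b (Finset.mem_univ b)

section EdgeColouring

variable {V : Type*} {G : SimpleGraph V} {k : ℕ} {φ : G.edgeSet → Fin k}

def ColouredAdj (φ : G.edgeSet → Fin k) (c : Fin k) (u v : V) : Prop :=
  ∃ h : G.Adj u v, φ ⟨s(u, v), h⟩ = c

def MissesColour (φ : G.edgeSet → Fin k) (v : V) (c : Fin k) : Prop :=
  ∀ e : G.edgeSet, v ∈ (e : Sym2 V) → φ e ≠ c

lemma ColouredAdj.colour_eq {c : Fin k} {u v : V} (h : ColouredAdj φ c u v) {e : G.edgeSet}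
    (he : (e : Sym2 V) = s(u, v)) : φ e = c := by
  obtain ⟨hadj, hc⟩ := h
  rwa [show e = ⟨s(u, v), hadj⟩ from Subtype.ext he]

lemma ColouredAdj.symm {c : Fin k} {u v : V} (h : ColouredAdj φ c u v) : ColouredAdj φ c v u :=
  ⟨h.1.symm, h.colour_eq Sym2.eq_swap⟩

lemma ColouredAdj.ne {c : Fin k} {u v : V} (h : ColouredAdj φ c u v) : u ≠ v :=
  h.1.ne

lemma missesColour_iff {v : V} {c : Fin k} :
    MissesColour φ v c ↔ ∀ u, ¬ ColouredAdj φ c v u := by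
  refine ⟨fun h u ⟨hadj, hc⟩ => h ⟨s(v, u), hadj⟩ (Sym2.mem_mk_left v u) hc,
    fun h e hv hc => ?_⟩
  obtain ⟨e, he⟩ := e
  induction e using Sym2.ind with
  | _ x y =>
    rcases Sym2.mem_iff.mp hv with rfl | rfl
    · exact h y ⟨he, hc⟩
    · exact h x ⟨G.adj_symm he, ColouredAdj.colour_eq ⟨he, hc⟩ Sym2.eq_swap⟩

open Classical in
/-- The other end of the `c`-coloured edge at `v`, and `v` itself if `c` is missing at `v`. -/
noncomputable def colourPartner (φ : G.edgeSet → Fin k) (c : Fin k) (v : V) : V :=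
  if h : ∃ u, ColouredAdj φ c v u then h.choose else v

lemma colourPartner_eq_self_iff {c : Fin k} {v : V} :
    colourPartner φ c v = v ↔ MissesColour φ v c := by
  rw [missesColour_iff, colourPartner]
  split_ifs with h
  · exact ⟨fun he => absurd he h.choose_spec.ne.symm, fun hm => absurd h.choose_spec (hm _)⟩
  · rw [not_exists] at h
    exact ⟨fun _ => h, fun _ => rfl⟩

lemma colouredAdj_colourPartner {c : Fin k} {v : V} (h : colourPartner φ c v ≠ v) :
    ColouredAdj φ c v (colourPartner φ c v) := by
  rw [colourPartner] at h ⊢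
  split_ifs at h ⊢ with hex
  · exact hex.choose_spec
  · exact absurd rfl h

lemma missesColour_of_colourPartner_eq {a b : Fin k} (hab : a ≠ b) {v : V}
    (h : colourPartner φ a v = colourPartner φ b v) :
    MissesColour φ v a ∧ MissesColour φ v b := by
  by_cases hv : colourPartner φ a v = v
  · exact ⟨colourPartner_eq_self_iff.mp hv, colourPartner_eq_self_iff.mp (h ▸ hv)⟩
  · obtain ⟨_, ha⟩ := colouredAdj_colourPartner hv
    have hb := colouredAdj_colourPartner (c := b) (h ▸ hv)
    rw [← h] at hb
    exact absurd (ha.symm.trans (hb.colour_eq rfl)) hab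

namespace IsProperEdgeColoring

variable (hφ : IsProperEdgeColoring G k φ)
include hφ

lemma eq_of_mem_of_mem {e₁ e₂ : G.edgeSet} (h : φ e₁ = φ e₂) {v : V}
    (h₁ : v ∈ (e₁ : Sym2 V)) (h₂ : v ∈ (e₂ : Sym2 V)) : e₁ = e₂ := by
  by_contra hne
  exact hφ e₁ e₂ hne ⟨v, h₁, h₂⟩ h

lemma eq_of_colouredAdj {c : Fin k} {v u u' : V} (h : ColouredAdj φ c v u)
    (h' : ColouredAdj φ c v u') : u = u' := by
  obtain ⟨hadj, hc⟩ := h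
  obtain ⟨hadj', hc'⟩ := h'
  have := hφ.eq_of_mem_of_mem (hc.trans hc'.symm) (Sym2.mem_mk_left v u) (Sym2.mem_mk_left v u')
  exact (Sym2.congr_right.mp (congrArg Subtype.val this))

lemma colourPartner_eq {c : Fin k} {v u : V} (h : ColouredAdj φ c v u) :
    colourPartner φ c v = u :=
  hφ.eq_of_colouredAdj (colouredAdj_colourPartner fun he =>
    missesColour_iff.mp (colourPartner_eq_self_iff.mp he) u h) h

lemma colourPartner_involutive (c : Fin k) : Involutive (colourPartner φ c) := fun v => by
  by_cases hv : colourPartner φ c v = v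
  · rw [hv, hv]
  · exact hφ.colourPartner_eq (colouredAdj_colourPartner hv).symm

lemma two_mul_ncard_add_ncard_missingVertices [Finite V] (c : Fin k) :
    2 * {e | φ e = c}.ncard + {v | MissesColour φ v c}.ncard = Nat.card V := by
  classical
  have := Fintype.ofFinite V
  let F : Finset G.edgeSet := Finset.univ.filter (φ · = c)
  let covered : Finset V := F.biUnion fun e => (e : Sym2 V).toFinset
  have hdisj : (F : Set G.edgeSet).PairwiseDisjoint fun e => (e : Sym2 V).toFinset := by
    intro e₁ he₁ e₂ he₂ hne
    refine Finset.disjoint_left.mpr fun v hv₁ hv₂ => hne ?_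
    simp only [Finset.coe_filter, Finset.mem_univ, true_and, Set.mem_ofPred_eq, F] at he₁ he₂
    exact hφ.eq_of_mem_of_mem (he₁.trans he₂.symm) (Sym2.mem_toFinset.mp hv₁)
      (Sym2.mem_toFinset.mp hv₂)
  have hcovered : covered.card = 2 * F.card := by
    rw [Finset.card_biUnion hdisj, Finset.sum_const_nat fun e _ =>
      Sym2.card_toFinset_of_not_isDiag _ (G.not_isDiag_of_mem_edgeSet e.2), mul_comm]
  have hmiss : {v | MissesColour φ v c} = (covered : Set V)ᶜ := by
    ext v
    simp [MissesColour, covered, F, imp_not_comm]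
  rw [hmiss, ← Set.ncard_add_ncard_compl (covered : Set V), Set.ncard_coe_finset, hcovered,
    ← Set.ncard_coe_finset]
  simp [F]

lemma ncard_missingColours_add_degree (v : V) [Fintype (G.neighborSet v)] :
    {c | MissesColour φ v c}.ncard + G.degree v = k := by
  let f : G.neighborSet v → Fin k := fun u => φ ⟨s(v, u), u.2⟩
  have hf : Injective f := fun u u' h => Subtype.ext <| Sym2.congr_right.mp <|
    congrArg Subtype.val (hφ.eq_of_mem_of_mem h (Sym2.mem_mk_left _ _) (Sym2.mem_mk_left _ _))
  have hmiss : {c | MissesColour φ v c} = (Set.range f)ᶜ := by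
    ext c
    simp only [Set.mem_ofPred_eq, missesColour_iff, Set.mem_compl_iff, Set.mem_range, not_exists]
    exact ⟨fun h u hu => h u ⟨u.2, hu⟩, fun h u ⟨hadj, hc⟩ => h ⟨u, hadj⟩ hc⟩
  rw [hmiss, ← card_neighborSet_eq_degree, ← Nat.card_eq_fintype_card, add_comm,
    ← Set.ncard_range_of_injective hf, Set.ncard_add_ncard_compl, Nat.card_eq_fintype_card,
    Fintype.card_fin]

end IsProperEdgeColoring

end EdgeColouring

namespace SimpleGraph.Walk

variable {V : Type*} {G : SimpleGraph V} {u v : V}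

lemma IsTrail.mem_edges_iff_of_ncard_le [Finite V] {w : G.Walk u v} (hw : w.IsTrail)
    {S : Set G.edgeSet} (hS : ∀ e : G.edgeSet, (e : Sym2 V) ∈ w.edges → e ∈ S)
    (hcard : S.ncard ≤ w.length) (e : G.edgeSet) : (e : Sym2 V) ∈ w.edges ↔ e ∈ S := by
  classical
  let T : Set G.edgeSet := {e | (e : Sym2 V) ∈ w.edges}
  have hT : T.ncard = w.length := by
    have himage : Subtype.val '' T = (w.edges.toFinset : Set (Sym2 V)) := by
      ext s
      simp only [Set.mem_image, List.coe_toFinset, Set.mem_ofPred_eq, T]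
      exact ⟨fun ⟨e, he, hs⟩ => hs ▸ he,
        fun hs => ⟨⟨s, w.edges_subset_edgeSet hs⟩, hs, rfl⟩⟩
    rw [← Set.ncard_image_of_injective T Subtype.val_injective, himage, Set.ncard_coe_finset,
      List.toFinset_card_of_nodup hw.edges_nodup, length_edges]
  have hTS : T = S := Set.eq_of_subset_of_ncard_le hS (hcard.trans hT.ge)
  exact Set.ext_iff.mp hTS e

lemma reachable_of_mem_support {w : G.Walk u v} {x : V} (hx : x ∈ w.support) :
    G.Reachable u x := by
  obtain ⟨q, -, -⟩ := mem_support_iff_exists_append.mp hx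
  exact q.reachable

end SimpleGraph.Walk

section Kempe

variable {V : Type*} {G : SimpleGraph V} {k : ℕ} {φ : G.edgeSet → Fin k}

lemma connected_kempeGraph_of_isHamiltonian [DecidableEq V] {a b : Fin k} {u v : V}
    {w : G.Walk u v} (hw : w.IsHamiltonian)
    (hcol : ∀ e : G.edgeSet, (e : Sym2 V) ∈ w.edges → φ e = a ∨ φ e = b) :
    (kempeGraph G φ a b).Connected := by
  have hedges : ∀ e ∈ w.edges, e ∈ (kempeGraph G φ a b).edgeSet := by
    intro e he
    induction e using Sym2.ind with
    | _ x y =>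
      have hadj : G.Adj x y := w.edges_subset_edgeSet he
      exact ⟨hadj, hcol ⟨s(x, y), hadj⟩ he⟩
  let w' := w.transfer _ hedges
  have hsupp : ∀ x, x ∈ w'.support := fun x => by
    rw [Walk.support_transfer]; exact hw.mem_support x
  have : Nonempty V := ⟨u⟩
  exact ⟨fun x y => (Walk.reachable_of_mem_support (hsupp x)).symm.trans
    (Walk.reachable_of_mem_support (hsupp y))⟩

lemma permRelated_of_kempeChange {ψ : G.edgeSet → Fin k}
    (hK : ∀ a b : Fin k, a ≠ b → (kempeGraph G φ a b).Preconnected)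
    (h : KempeChange G k φ ψ) : PermRelated G k φ ψ := by
  obtain ⟨a, b, w, hψ⟩ := h
  refine ⟨Equiv.swap a b, fun e => ?_⟩
  by_cases hin : InKempeChain G φ a b w e
  · exact (hψ e).1 hin
  rw [(hψ e).2 hin]
  by_cases hab : a = b
  · rw [hab, Equiv.swap_self, Equiv.refl_apply]
  · have hc : ¬ (φ e = a ∨ φ e = b) := fun hc =>
      hin ⟨hc, _, Sym2.out_fst_mem _, hK a b hab _ _⟩
    push Not at hc
    exact (Equiv.swap_apply_of_ne_of_ne hc.1 hc.2).symm

end Kempe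

lemma nodup_alternating_of_card_eq_five {α : Type*} [Fintype α] (hα : Fintype.card α = 5)
    {σ τ : α → α} (hσ : Involutive σ) (hτ : Involutive τ) {x y : α}
    (hσx : ∀ v, σ v = v ↔ v = x) (hτy : ∀ v, τ v = v ↔ v = y)
    (hστ : ∀ v, σ v ≠ τ v) :
    [x, τ x, σ (τ x), τ (σ (τ x)), σ (τ (σ (τ x)))].Nodup := by
  classical
  set v₁ := τ x
  set v₂ := σ v₁
  set v₃ := τ v₂
  set v₄ := σ v₃
  have hx : σ x = x := (hσx x).mpr rfl
  have h01 : x ≠ v₁ := fun h => hστ x (hx.trans h)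
  have h12 : v₁ ≠ v₂ := fun h => h01 ((hσx v₁).mp h.symm).symm
  have h02 : x ≠ v₂ := fun h => h01 (by rw [hσ.eq_iff.mp h.symm, hx])
  -- If `v₂` were the fixed point of `τ`, the two remaining points would be swapped by both
  -- `σ` and `τ`.
  have h23 : v₂ ≠ v₃ := by
    intro hfix
    obtain ⟨z, -, hz⟩ := Finset.exists_mem_notMem_of_card_lt_card
      (s := [x, v₁, v₂].toFinset) (t := Finset.univ)
      (by rw [Finset.card_univ, hα]; exact (List.toFinset_card_le _).trans_lt (by simp))
    simp only [List.mem_toFinset, List.mem_cons, List.not_mem_nil, or_false, not_or] at hz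
    obtain ⟨hzx, hz₁, hz₂⟩ := hz
    have hσz : z ≠ σ z := fun h => hzx ((hσx z).mp h.symm)
    have hτz : z ≠ τ z := fun h =>
      hz₂ (((hτy z).mp h.symm).trans ((hτy v₂).mp hfix.symm).symm)
    have h0σ : x ≠ σ z := fun h => hzx (by rw [hσ.eq_iff.mp h.symm, hx])
    have h1σ : v₁ ≠ σ z := fun h => hz₂ (hσ.eq_iff.mp h.symm)
    have h2σ : v₂ ≠ σ z := fun h => hz₁ (by rw [hσ.eq_iff.mp h.symm]; exact hσ v₁)
    have h0τ : x ≠ τ z := fun h => hz₁ (hτ.eq_iff.mp h.symm)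
    have h1τ : v₁ ≠ τ z := fun h => hzx (by rw [hτ.eq_iff.mp h.symm]; exact hτ x)
    have h2τ : v₂ ≠ τ z := fun h => hz₂ (by rw [hτ.eq_iff.mp h.symm]; exact hfix.symm)
    have hnodup : [x, v₁, v₂, z, σ z, τ z].Nodup := by
      simp [h01, h02, h12, Ne.symm hzx, Ne.symm hz₁, Ne.symm hz₂, hσz, hτz, h0σ, h1σ, h2σ,
        h0τ, h1τ, h2τ, hστ z]
    simpa [hα] using hnodup.length_le_card
  have h13 : v₁ ≠ v₃ := fun h => h02 (by rw [hτ.eq_iff.mp h.symm]; exact (hτ x).symm)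
  have h03 : x ≠ v₃ := fun h => h12 (by rw [hτ.eq_iff.mp h.symm])
  have h34 : v₃ ≠ v₄ := fun h => h03 ((hσx v₃).mp h.symm).symm
  have h24 : v₂ ≠ v₄ := fun h => h13 (by rw [hσ.eq_iff.mp h.symm]; exact (hσ v₁).symm)
  have h14 : v₁ ≠ v₄ := fun h => h23 (by rw [hσ.eq_iff.mp h.symm])
  have h04 : x ≠ v₄ := fun h => h03 (by rw [hσ.eq_iff.mp h.symm, hx])
  simp [h01, h02, h03, h04, h12, h13, h14, h23, h24, h34]

namespace K5

variable {φ : (completeGraph (Fin 5)).edgeSet → Fin 5}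
  (hφ : IsProperEdgeColoring (completeGraph (Fin 5)) 5 φ)
include hφ

lemma ncard_colourClass (c : Fin 5) : {e | φ e = c}.ncard = 2 := by
  classical
  refine ncard_fiber_eq_of_forall_le (fun c => ?_) ?_ c
  · have := hφ.two_mul_ncard_add_ncard_missingVertices c
    rw [Nat.card_eq_fintype_card, Fintype.card_fin] at this
    omega
  · rw [← edgeFinset_card, card_edgeFinset_top_eq_card_choose_two]
    rfl

lemma ncard_missingVertices (c : Fin 5) : {v | MissesColour φ v c}.ncard = 1 := by
  have := hφ.two_mul_ncard_add_ncard_missingVertices c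
  rw [ncard_colourClass hφ, Nat.card_eq_fintype_card, Fintype.card_fin] at this
  omega

lemma ncard_missingColours (v : Fin 5) : {c | MissesColour φ v c}.ncard = 1 := by
  classical
  have := hφ.ncard_missingColours_add_degree v
  rw [complete_graph_degree, Fintype.card_fin] at this
  omega

lemma colourPartner_ne_colourPartner {a b : Fin 5} (hab : a ≠ b) (v : Fin 5) :
    colourPartner φ a v ≠ colourPartner φ b v := by
  intro h
  obtain ⟨ha, hb⟩ := missesColour_of_colourPartner_eq hab h
  have := Set.ncard_le_ncard (s := {a, b}) (t := {c | MissesColour φ v c})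
    (Set.insert_subset ha (Set.singleton_subset_iff.mpr hb))
  rw [Set.ncard_pair hab, ncard_missingColours hφ] at this
  omega

lemma exists_forall_colourPartner_eq_self_iff (c : Fin 5) :
    ∃ x, ∀ v, colourPartner φ c v = v ↔ v = x := by
  obtain ⟨x, hx⟩ := Set.ncard_eq_one.mp (ncard_missingVertices hφ c)
  exact ⟨x, fun v => by rw [colourPartner_eq_self_iff, ← Set.mem_singleton_iff, ← hx]; rfl⟩

theorem exists_isHamiltonian_edges_iff {a b : Fin 5} (hab : a ≠ b) :
    ∃ (u v : Fin 5) (w : (completeGraph (Fin 5)).Walk u v), w.IsPath ∧ w.IsHamiltonian ∧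
      ∀ e : (completeGraph (Fin 5)).edgeSet,
        (e : Sym2 (Fin 5)) ∈ w.edges ↔ (φ e = a ∨ φ e = b) := by
  obtain ⟨x, hx⟩ := exists_forall_colourPartner_eq_self_iff hφ a
  obtain ⟨y, hy⟩ := exists_forall_colourPartner_eq_self_iff hφ b
  have hnodup := nodup_alternating_of_card_eq_five (Fintype.card_fin 5)
    (hφ.colourPartner_involutive a) (hφ.colourPartner_involutive b) hx hy
    (colourPartner_ne_colourPartner hφ hab)
  set σ := colourPartner φ a
  set τ := colourPartner φ b
  set v₁ := τ x
  set v₂ := σ v₁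
  set v₃ := τ v₂
  set v₄ := σ v₃
  have hne := hnodup
  simp only [List.nodup_cons, List.mem_cons, List.not_mem_nil, or_false, not_or,
    List.nodup_nil, and_true] at hne
  obtain ⟨⟨h01, -, -, -⟩, ⟨h12, -, -⟩, ⟨h23, -⟩, h34, -⟩ := hne
  have c01 : ColouredAdj φ b x v₁ := colouredAdj_colourPartner (Ne.symm h01)
  have c12 : ColouredAdj φ a v₁ v₂ := colouredAdj_colourPartner (Ne.symm h12)
  have c23 : ColouredAdj φ b v₂ v₃ := colouredAdj_colourPartner (Ne.symm h23)
  have c34 : ColouredAdj φ a v₃ v₄ := colouredAdj_colourPartner (Ne.symm h34)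
  let w : (completeGraph (Fin 5)).Walk x v₄ :=
    .cons c01.1 (.cons c12.1 (.cons c23.1 (.cons c34.1 .nil)))
  have hpath : w.IsPath := Walk.IsPath.mk' (by simpa [w] using hnodup)
  refine ⟨x, v₄, w, hpath, ?_, hpath.isTrail.mem_edges_iff_of_ncard_le ?_ ?_⟩
  · exact (Walk.isHamiltonian_iff_isPath_and_length_eq).mpr ⟨hpath, by simp [w]⟩
  · intro e he
    simp only [w, Walk.edges_cons, Walk.edges_nil, List.mem_cons, List.not_mem_nil,
      or_false] at he
    rcases he with he | he | he | he
    exacts [Or.inr (c01.colour_eq he), Or.inl (c12.colour_eq he), Or.inr (c23.colour_eq he),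
      Or.inl (c34.colour_eq he)]
  · calc {e | φ e = a ∨ φ e = b}.ncard
        ≤ {e | φ e = a}.ncard + {e | φ e = b}.ncard := Set.ncard_union_le _ _
      _ = w.length := by simp [ncard_colourClass hφ, w]

end K5

/-- **Structure of proper 5-edge-colourings of `K₅`.** In every proper 5-edge-colouring
of `K₅`: every colour class has size exactly two; each colour is missing at exactly one
vertex; the union of any two colour classes forms a Hamiltonian path of `K₅`; and no
nontrivial Kempe change can be performed (every Kempe change yields a colouring that
differs only by a permutation of the colours). -/
theorem K5_five_edge_colouring_structure
    (φ : (completeGraph (Fin 5)).edgeSet → Fin 5)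
    (hφ : IsProperEdgeColoring (completeGraph (Fin 5)) 5 φ) :
    (∀ c : Fin 5, {e : (completeGraph (Fin 5)).edgeSet | φ e = c}.ncard = 2) ∧
    (∀ c : Fin 5,
      {v : Fin 5 | ∀ e : (completeGraph (Fin 5)).edgeSet,
        v ∈ (e : Sym2 (Fin 5)) → φ e ≠ c}.ncard = 1) ∧
    (∀ a b : Fin 5, a ≠ b →
      ∃ (u v : Fin 5) (w : (completeGraph (Fin 5)).Walk u v),
        w.IsPath ∧ w.IsHamiltonian ∧
        ∀ e : (completeGraph (Fin 5)).edgeSet,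
          (e : Sym2 (Fin 5)) ∈ w.edges ↔ (φ e = a ∨ φ e = b)) ∧
    (∀ ψ : (completeGraph (Fin 5)).edgeSet → Fin 5,
      KempeChange (completeGraph (Fin 5)) 5 φ ψ →
        PermRelated (completeGraph (Fin 5)) 5 φ ψ) := by
  have hpath := fun a b (hab : a ≠ b) => K5.exists_isHamiltonian_edges_iff hφ hab
  refine ⟨K5.ncard_colourClass hφ, K5.ncard_missingVertices hφ, hpath,
    fun ψ => permRelated_of_kempeChange fun a b hab => ?_⟩
  obtain ⟨_, _, _, -, hw, hedges⟩ := hpath a b hab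
  exact (connected_kempeGraph_of_isHamiltonian hw fun e he => (hedges e).mp he).preconnected
end

section
/- Let G be a connected simple graph with maximum degree at most 3 that has at least one vertex of degree at most two. Then all proper 4-edge-colourings of G are Kempe equivalent, i.e. κ_E(G, 4) = 1. -/
open SimpleGraph

/-! Induction on the number of edges. Delete an edge `e = uz` at a vertex `z` of degree at most
two: in `G - e` every vertex still reaches a vertex of degree at most two (its old one, `u` or
`z`), so the restrictions of `φ` and `ψ` are Kempe equivalent there. A Kempe change of `G - e`
lifts to `G` unchanged unless it involves the colour of `e` and both ends of `e` meet a second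
edge of the two swapped colours; since `deg u + deg z ≤ 5`, some colour is then missing at both
ends of `e`, and recolouring `e` with it is itself a Kempe change. At the end the lifted colouring
and `ψ` differ at most on `e`, and such colourings are one Kempe change apart. -/

namespace SimpleGraph

variable {V : Type*} {G : SimpleGraph V}

lemma IsIsolated.eq_of_reachable {v w : V} (hv : G.IsIsolated v) (h : G.Reachable v w) :
    w = v := by
  obtain ⟨p⟩ := h
  cases p with
  | nil => rfl
  | cons hadj _ => exact absurd hadj (hv _)

lemma Reachable.exists_adj_of_adj {x y z : V} (hxz : G.Reachable x z) (hxy : G.Adj x y) :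
    ∃ z', G.Adj z z' := by
  obtain ⟨p⟩ := hxz.symm
  cases p with
  | nil => exact ⟨y, hxy⟩
  | cons hadj _ => exact ⟨_, hadj⟩

lemma Reachable.deleteEdges_pair_or {u v x y : V} (h : G.Reachable x y) :
    (G.deleteEdges {s(u, v)}).Reachable x y ∨
      ((G.deleteEdges {s(u, v)}).Reachable x u ∧ (G.deleteEdges {s(u, v)}).Reachable v y) ∨
      ((G.deleteEdges {s(u, v)}).Reachable x v ∧ (G.deleteEdges {s(u, v)}).Reachable u y) := by
  obtain ⟨p⟩ := h
  induction p with
  | nil => exact Or.inl .rfl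
  | @cons x x' y hadj _ ih =>
    by_cases he : s(x, x') = s(u, v)
    · rcases Sym2.eq_iff.1 he with ⟨rfl, rfl⟩ | ⟨rfl, rfl⟩
      · rcases ih with h | ⟨-, h⟩ | ⟨-, h⟩
        exacts [Or.inr (Or.inl ⟨.rfl, h⟩), Or.inr (Or.inl ⟨.rfl, h⟩), Or.inl h]
      · rcases ih with h | ⟨-, h⟩ | ⟨-, h⟩
        exacts [Or.inr (Or.inr ⟨.rfl, h⟩), Or.inl h, Or.inr (Or.inr ⟨.rfl, h⟩)]
    · have hadj' : (G.deleteEdges {s(u, v)}).Adj x x' := by simp [hadj, he]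
      rcases ih with h | ⟨h, h'⟩ | ⟨h, h'⟩
      exacts [Or.inl (hadj'.reachable.trans h), Or.inr (Or.inl ⟨hadj'.reachable.trans h, h'⟩),
        Or.inr (Or.inr ⟨hadj'.reachable.trans h, h'⟩)]

lemma Reachable.deleteEdges_or {u v x y : V} (h : G.Reachable x y) :
    (G.deleteEdges {s(u, v)}).Reachable x y ∨ (G.deleteEdges {s(u, v)}).Reachable x u ∨
      (G.deleteEdges {s(u, v)}).Reachable x v := by
  rcases h.deleteEdges_pair_or (u := u) (v := v) with h | ⟨h, -⟩ | ⟨h, -⟩ <;> simp [h]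

lemma degree_deleteEdges_lt [Fintype V] [DecidableRel G.Adj] (s : Set (Sym2 V))
    [DecidableRel (G.deleteEdges s).Adj] {u v : V} (huv : G.Adj u v) (hs : s(u, v) ∈ s) :
    (G.deleteEdges s).degree u < G.degree u := by
  refine Finset.card_lt_card ⟨fun x hx => ?_, fun hsub => ?_⟩
  · simp only [mem_neighborFinset, deleteEdges_adj] at hx ⊢
    exact hx.1
  · have := hsub ((G.mem_neighborFinset u v).2 huv)
    simp [hs] at this

end SimpleGraph

section KempeSwap

variable {V : Type*} {k : ℕ} {G : SimpleGraph V} {φ : G.edgeSet → Fin k} {a b : Fin k} {w : V}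

open Classical in
noncomputable def kempeSwap (G : SimpleGraph V) (φ : G.edgeSet → Fin k) (a b : Fin k) (w : V) :
    G.edgeSet → Fin k :=
  fun f => if InKempeChain G φ a b w f then Equiv.swap a b (φ f) else φ f

lemma kempeChange_kempeSwap : KempeChange G k φ (kempeSwap G φ a b w) :=
  ⟨a, b, w, fun _ => ⟨fun h => if_pos h, fun h => if_neg h⟩⟩

lemma KempeChange.exists_eq_kempeSwap {ψ : G.edgeSet → Fin k} (h : KempeChange G k φ ψ) :
    ∃ a b w, ψ = kempeSwap G φ a b w := by
  obtain ⟨a, b, w, h⟩ := h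
  refine ⟨a, b, w, funext fun f => ?_⟩
  unfold kempeSwap
  split_ifs with hf
  exacts [(h f).1 hf, (h f).2 hf]

lemma kempeSwap_self : kempeSwap G φ a a w = φ := by
  funext f
  simp [kempeSwap]

lemma kempeGraph_adj_of_eq_mk {f : G.edgeSet} (hf : φ f = a ∨ φ f = b) {x y : V}
    (hxy : (f : Sym2 V) = s(x, y)) : (kempeGraph G φ a b).Adj x y := by
  obtain ⟨f, hfG⟩ := f
  subst hxy
  exact ⟨hfG, hf⟩

lemma coe_mem_edgeSet_kempeGraph {f : G.edgeSet} :
    (f : Sym2 V) ∈ (kempeGraph G φ a b).edgeSet ↔ φ f = a ∨ φ f = b := by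
  obtain ⟨f, hf⟩ := f
  induction f using Sym2.ind with
  | _ x y => exact ⟨fun ⟨_, hc⟩ => hc, fun hc => ⟨hf, hc⟩⟩

lemma kempeGraph_adj_of_mem {f : G.edgeSet} (hf : φ f = a ∨ φ f = b) {x : V}
    (hx : x ∈ (f : Sym2 V)) : ∃ y, (kempeGraph G φ a b).Adj x y := by
  obtain ⟨y, hy⟩ := Sym2.mem_iff_exists.1 hx
  exact ⟨y, kempeGraph_adj_of_eq_mk hf hy⟩

lemma InKempeChain.reachable {f : G.edgeSet} (h : InKempeChain G φ a b w f) {x : V}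
    (hx : x ∈ (f : Sym2 V)) : (kempeGraph G φ a b).Reachable w x := by
  obtain ⟨hf, y, hy, hwy⟩ := h
  obtain ⟨z, hz⟩ := Sym2.mem_iff_exists.1 hy
  rw [hz] at hx
  rcases Sym2.mem_iff.1 hx with rfl | rfl
  · exact hwy
  · exact hwy.trans (kempeGraph_adj_of_eq_mk hf hz).reachable

lemma kempeSwap_eq_self_of_isIsolated (hw : (kempeGraph G φ a b).IsIsolated w) :
    kempeSwap G φ a b w = φ := by
  funext f
  refine if_neg fun ⟨hf, x, hx, hwx⟩ => ?_
  obtain rfl := hw.eq_of_reachable hwx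
  obtain ⟨y, hy⟩ := kempeGraph_adj_of_mem hf hx
  exact hw y hy

lemma isProperEdgeColoring_kempeSwap (hφ : IsProperEdgeColoring G k φ) :
    IsProperEdgeColoring G k (kempeSwap G φ a b w) := by
  have mixed : ∀ f₁ f₂ : G.edgeSet, ∀ x ∈ (f₁ : Sym2 V), x ∈ (f₂ : Sym2 V) →
      InKempeChain G φ a b w f₁ → ¬ InKempeChain G φ a b w f₂ →
      Equiv.swap a b (φ f₁) ≠ φ f₂ := by
    intro f₁ f₂ x hx₁ hx₂ h₁ h₂ heq
    refine h₂ ⟨?_, x, hx₂, h₁.reachable hx₁⟩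
    rw [← heq]
    rcases h₁.1 with h | h <;> simp [h]
  intro f₁ f₂ hne hshare
  obtain ⟨x, hx₁, hx₂⟩ := hshare
  unfold kempeSwap
  split_ifs with h₁ h₂ h₂
  · exact fun h => hφ f₁ f₂ hne ⟨x, hx₁, hx₂⟩ ((Equiv.swap a b).injective h)
  · exact mixed f₁ f₂ x hx₁ hx₂ h₁ h₂
  · exact (mixed f₂ f₁ x hx₂ hx₁ h₂ h₁).symm
  · exact hφ f₁ f₂ hne ⟨x, hx₁, hx₂⟩

lemma IsProperEdgeColoring.of_kempeEquiv {ψ : G.edgeSet → Fin k}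
    (hφ : IsProperEdgeColoring G k φ) (h : KempeEquiv G k φ ψ) : IsProperEdgeColoring G k ψ := by
  induction h with
  | refl => exact hφ
  | tail _ hstep ih =>
    obtain ⟨a, b, w, rfl⟩ := hstep.exists_eq_kempeSwap
    exact isProperEdgeColoring_kempeSwap ih

end KempeSwap

section Restrict

variable {V : Type*} {k : ℕ} {G H : SimpleGraph V} {φ : G.edgeSet → Fin k} {a b : Fin k} {w : V}

def restrictColoring (h : H ≤ G) (φ : G.edgeSet → Fin k) : H.edgeSet → Fin k :=
  φ ∘ Set.inclusion (edgeSet_mono h)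

lemma isProperEdgeColoring_restrictColoring (h : H ≤ G) (hφ : IsProperEdgeColoring G k φ) :
    IsProperEdgeColoring H k (restrictColoring h φ) :=
  fun _ _ hne hshare =>
    hφ _ _ (fun heq => hne (Set.inclusion_injective (edgeSet_mono h) heq)) hshare

lemma kempeGraph_restrictColoring_le (h : H ≤ G) :
    kempeGraph H (restrictColoring h φ) a b ≤ kempeGraph G φ a b :=
  fun _ _ ⟨hadj, hc⟩ => ⟨h hadj, hc⟩

lemma kempeGraph_restrictColoring_deleteEdges (s : Set (Sym2 V)) :
    kempeGraph (G.deleteEdges s) (restrictColoring (G.deleteEdges_le s) φ) a b =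
      (kempeGraph G φ a b).deleteEdges s := by
  ext x y
  simp only [kempeGraph, deleteEdges_adj, restrictColoring, Function.comp_apply]
  exact ⟨fun ⟨⟨hadj, hs⟩, hc⟩ => ⟨⟨hadj, hc⟩, hs⟩, fun ⟨⟨hadj, hc⟩, hs⟩ => ⟨⟨hadj, hs⟩, hc⟩⟩

lemma restrictColoring_kempeSwap (h : H ≤ G)
    (hreach : ∀ x, (kempeGraph G φ a b).Reachable w x →
      (kempeGraph H (restrictColoring h φ) a b).Reachable w x ∨
        (kempeGraph H (restrictColoring h φ) a b).IsIsolated x) :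
    restrictColoring h (kempeSwap G φ a b w) = kempeSwap H (restrictColoring h φ) a b w := by
  have hchain : ∀ f : H.edgeSet, InKempeChain G φ a b w (Set.inclusion (edgeSet_mono h) f) ↔
      InKempeChain H (restrictColoring h φ) a b w f := by
    intro f
    refine ⟨fun ⟨hc, x, hx, hwx⟩ => ⟨hc, x, hx, ?_⟩, fun ⟨hc, x, hx, hwx⟩ =>
      ⟨hc, x, hx, hwx.mono (kempeGraph_restrictColoring_le h)⟩⟩
    refine (hreach x hwx).resolve_right fun hiso => ?_
    obtain ⟨y, hy⟩ := kempeGraph_adj_of_mem (φ := restrictColoring h φ) hc hx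
    exact hiso y hy
  funext f
  unfold kempeSwap
  rw [← hchain f]
  rfl

lemma eq_of_restrictColoring_deleteEdges_eq {e f : G.edgeSet} {ψ : G.edgeSet → Fin k}
    (h : restrictColoring (G.deleteEdges_le {(e : Sym2 V)}) φ =
      restrictColoring (G.deleteEdges_le {(e : Sym2 V)}) ψ) (hf : f ≠ e) : φ f = ψ f :=
  congrFun h ⟨f, by rw [edgeSet_deleteEdges]; exact ⟨f.2, fun h => hf (Subtype.ext h)⟩⟩

end Restrict

section Recolour

variable {V : Type*} {k : ℕ} {G : SimpleGraph V} {φ ψ : G.edgeSet → Fin k} {a b : Fin k}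

lemma isIsolated_kempeGraph_deleteEdges {e : G.edgeSet} {p : V}
    (hp : ∀ f : G.edgeSet, f ≠ e → p ∈ (f : Sym2 V) → ¬(φ f = a ∨ φ f = b)) :
    ((kempeGraph G φ a b).deleteEdges {(e : Sym2 V)}).IsIsolated p := by
  intro y hy
  obtain ⟨⟨hadj, hc⟩, hne⟩ := deleteEdges_adj.1 hy
  exact hp ⟨s(p, y), hadj⟩ (fun h => hne (congrArg Subtype.val h)) (Sym2.mem_mk_left p y) hc

/-- The `(φ e, ψ e)`-component of an endpoint of `e` consists of `e` alone. -/
lemma kempeChange_of_forall_ne_eq (hφ : IsProperEdgeColoring G k φ)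
    (hψ : IsProperEdgeColoring G k ψ) (e : G.edgeSet) (h : ∀ f, f ≠ e → φ f = ψ f) :
    KempeChange G k φ ψ := by
  obtain ⟨⟨u, v⟩, he⟩ := e
  set e : G.edgeSet := ⟨s(u, v), he⟩
  have hfree : ∀ f : G.edgeSet, f ≠ e → ∀ x ∈ (e : Sym2 V), x ∈ (f : Sym2 V) →
      ¬(φ f = φ e ∨ φ f = ψ e) := by
    rintro f hfe x hxe hxf (hc | hc)
    · exact hφ f e hfe ⟨x, hxf, hxe⟩ hc
    · exact hψ f e hfe ⟨x, hxf, hxe⟩ (h f hfe ▸ hc)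
  have hiso : ∀ x ∈ (e : Sym2 V),
      ((kempeGraph G φ (φ e) (ψ e)).deleteEdges {s(u, v)}).IsIsolated x :=
    fun x hx => isIsolated_kempeGraph_deleteEdges fun f hfe => hfree f hfe x hx
  have hchain : ∀ f, InKempeChain G φ (φ e) (ψ e) u f ↔ f = e := by
    refine fun f => ⟨fun ⟨hc, x, hxf, hux⟩ => ?_, fun hfe => ?_⟩
    · by_contra hfe
      have hxe : x ∈ (e : Sym2 V) := by
        rcases hux.deleteEdges_pair_or (u := u) (v := v) with hux | ⟨-, hvx⟩ | ⟨huv, -⟩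
        · rw [(hiso u (Sym2.mem_mk_left u v)).eq_of_reachable hux]; exact Sym2.mem_mk_left u v
        · rw [(hiso v (Sym2.mem_mk_right u v)).eq_of_reachable hvx]
          exact Sym2.mem_mk_right u v
        · exact absurd ((hiso u (Sym2.mem_mk_left u v)).eq_of_reachable huv)
            (G.ne_of_adj he).symm
      exact hfree f hfe x hxe hxf hc
    · subst hfe
      exact ⟨Or.inl rfl, u, Sym2.mem_mk_left u v, .rfl⟩
  refine ⟨φ e, ψ e, u, fun f => ⟨fun hf => ?_, fun hf => ?_⟩⟩
  · obtain rfl := (hchain f).1 hf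
    exact (Equiv.swap_apply_left _ _).symm
  · exact (h f fun hfe => hf ((hchain f).2 hfe)).symm

def colorsAt (G : SimpleGraph V) (φ : G.edgeSet → Fin k) (u : V) : Set (Fin k) :=
  {c | ∃ f : G.edgeSet, u ∈ (f : Sym2 V) ∧ φ f = c}

lemma ncard_colorsAt_le {u : V} [Fintype (G.neighborSet u)] :
    (colorsAt G φ u).ncard ≤ G.degree u := by
  classical
  have hrange : colorsAt G φ u = Set.range fun f : G.incidenceSet u => φ ⟨f, f.2.1⟩ := by
    ext c
    constructor
    · rintro ⟨f, hu, rfl⟩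
      exact ⟨⟨f, f.2, hu⟩, rfl⟩
    · rintro ⟨f, rfl⟩
      exact ⟨_, f.2.2, rfl⟩
  rw [hrange, ← Nat.card_coe_set_eq, ← card_incidenceSet_eq_degree,
    ← Nat.card_eq_fintype_card]
  exact Finite.card_range_le _

/-- Inclusion–exclusion: the colours at `u` or `v` number at most `deg u + deg v - 2 < k`. -/
lemma exists_notMem_colorsAt {u v : V} [Fintype (G.neighborSet u)] [Fintype (G.neighborSet v)]
    (hab : a ≠ b) (hu : {a, b} ⊆ colorsAt G φ u) (hv : {a, b} ⊆ colorsAt G φ v)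
    (hdeg : G.degree u + G.degree v ≤ k + 1) :
    ∃ d, d ∉ colorsAt G φ u ∧ d ∉ colorsAt G φ v := by
  by_contra! hcover
  have hunion : colorsAt G φ u ∪ colorsAt G φ v = Set.univ :=
    Set.eq_univ_of_forall fun d => (em _).elim Or.inl fun hd => Or.inr (hcover d hd)
  have hinter : 2 ≤ (colorsAt G φ u ∩ colorsAt G φ v).ncard :=
    (Set.ncard_pair hab).symm.le.trans (Set.ncard_le_ncard (Set.subset_inter hu hv))
  have := Set.ncard_union_add_ncard_inter (colorsAt G φ u) (colorsAt G φ v)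
  rw [hunion, Set.ncard_univ, Nat.card_eq_fintype_card, Fintype.card_fin] at this
  have := ncard_colorsAt_le (φ := φ) (u := u)
  have := ncard_colorsAt_le (φ := φ) (u := v)
  omega

end Recolour

section Lift

variable {V : Type*} {k : ℕ} {G : SimpleGraph V} {φ : G.edgeSet → Fin k} {a b : Fin k} {w : V}
  {e : G.edgeSet}

lemma restrictColoring_kempeSwap_deleteEdges_of_ne (hea : φ e ≠ a) (heb : φ e ≠ b) :
    restrictColoring (G.deleteEdges_le {(e : Sym2 V)}) (kempeSwap G φ a b w) =
      kempeSwap _ (restrictColoring (G.deleteEdges_le {(e : Sym2 V)}) φ) a b w := by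
  have he : (e : Sym2 V) ∉ (kempeGraph G φ a b).edgeSet := by
    rw [coe_mem_edgeSet_kempeGraph]
    rintro (hc | hc)
    exacts [hea hc, heb hc]
  refine restrictColoring_kempeSwap _ fun x hx => Or.inl ?_
  rwa [kempeGraph_restrictColoring_deleteEdges, deleteEdges_eq_self.2
    (Set.disjoint_singleton_right.2 he)]

/-- Either `w = p` and the Kempe change in `G - e` is trivial, or putting `e` back adds at most
the vertex `p` to the `(a, b)`-component of `w`. -/
lemma exists_kempeEquiv_restrictColoring_eq_of_isolated {p : V} (hpe : p ∈ (e : Sym2 V))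
    (hp : ∀ f : G.edgeSet, f ≠ e → p ∈ (f : Sym2 V) → ¬(φ f = a ∨ φ f = b)) :
    ∃ φ₁, KempeEquiv G k φ φ₁ ∧ restrictColoring (G.deleteEdges_le {(e : Sym2 V)}) φ₁ =
      kempeSwap _ (restrictColoring (G.deleteEdges_le {(e : Sym2 V)}) φ) a b w := by
  have hiso := isIsolated_kempeGraph_deleteEdges hp
  rw [← kempeGraph_restrictColoring_deleteEdges] at hiso
  by_cases hwp :
      (kempeGraph _ (restrictColoring (G.deleteEdges_le {(e : Sym2 V)}) φ) a b).Reachable w p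
  · obtain rfl := hiso.eq_of_reachable hwp.symm
    exact ⟨φ, .refl, (kempeSwap_eq_self_of_isIsolated hiso).symm⟩
  refine ⟨_, .single kempeChange_kempeSwap, restrictColoring_kempeSwap _ fun x hx => ?_⟩
  obtain ⟨q, hpq⟩ := Sym2.mem_iff_exists.1 hpe
  rw [kempeGraph_restrictColoring_deleteEdges, hpq] at hwp hiso ⊢
  rcases hx.deleteEdges_pair_or (u := p) (v := q) with hwx | ⟨hwp', -⟩ | ⟨-, hpx⟩
  · exact Or.inl hwx
  · exact absurd hwp' hwp
  · exact Or.inr (hiso.eq_of_reachable hpx ▸ hiso)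

lemma pair_subset_colorsAt (hφ : IsProperEdgeColoring G k φ) {f₁ f₂ : G.edgeSet} (hne : f₁ ≠ f₂)
    {x : V} (hx₁ : x ∈ (f₁ : Sym2 V)) (hx₂ : x ∈ (f₂ : Sym2 V)) (hc₁ : φ f₁ = a ∨ φ f₁ = b)
    (hc₂ : φ f₂ = a ∨ φ f₂ = b) : {a, b} ⊆ colorsAt G φ x := by
  have hdiff := hφ f₁ f₂ hne ⟨x, hx₁, hx₂⟩
  have hab : ∀ c, c = a ∨ c = b → c = φ f₁ ∨ c = φ f₂ := by grind
  rintro c hc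
  rcases hab c hc with rfl | rfl
  exacts [⟨f₁, hx₁, rfl⟩, ⟨f₂, hx₂, rfl⟩]

lemma IsProperEdgeColoring.update [DecidableEq G.edgeSet] (hφ : IsProperEdgeColoring G k φ)
    {d : Fin k} (hd : ∀ x ∈ (e : Sym2 V), d ∉ colorsAt G φ x) :
    IsProperEdgeColoring G k (Function.update φ e d) := by
  rintro f₁ f₂ hne ⟨x, hx₁, hx₂⟩
  by_cases h₁ : f₁ = e <;> by_cases h₂ : f₂ = e
  · exact absurd (h₁.trans h₂.symm) hne
  · subst h₁
    rw [Function.update_self, Function.update_of_ne h₂]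
    exact fun h => hd x hx₁ ⟨f₂, hx₂, h.symm⟩
  · subst h₂
    rw [Function.update_self, Function.update_of_ne h₁]
    exact fun h => hd x hx₂ ⟨f₁, hx₁, h⟩
  · rw [Function.update_of_ne h₁, Function.update_of_ne h₂]
    exact hφ f₁ f₂ hne ⟨x, hx₁, hx₂⟩

lemma restrictColoring_deleteEdges_update [DecidableEq G.edgeSet] (d : Fin k) :
    restrictColoring (G.deleteEdges_le {(e : Sym2 V)}) (Function.update φ e d) =
      restrictColoring (G.deleteEdges_le {(e : Sym2 V)}) φ := by
  funext f
  refine Function.update_of_ne (fun h => ?_) _ _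
  have hf : (f : Sym2 V) ∈ G.edgeSet \ {(e : Sym2 V)} := by simpa using f.2
  exact hf.2 (congrArg Subtype.val h)

lemma exists_kempeEquiv_restrictColoring_eq_kempeSwap {u v : V} [Fintype (G.neighborSet u)]
    [Fintype (G.neighborSet v)] (hφ : IsProperEdgeColoring G k φ) (he : (e : Sym2 V) = s(u, v))
    (hdeg : G.degree u + G.degree v ≤ k + 1) :
    ∃ φ₁, KempeEquiv G k φ φ₁ ∧ restrictColoring (G.deleteEdges_le {(e : Sym2 V)}) φ₁ =
      kempeSwap _ (restrictColoring (G.deleteEdges_le {(e : Sym2 V)}) φ) a b w := by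
  classical
  by_cases hab : a = b
  · subst hab
    exact ⟨φ, .refl, kempeSwap_self.symm⟩
  by_cases hea : φ e = a ∨ φ e = b
  swap
  · push Not at hea
    exact ⟨_, .single kempeChange_kempeSwap,
      restrictColoring_kempeSwap_deleteEdges_of_ne hea.1 hea.2⟩
  have hue : u ∈ (e : Sym2 V) := he ▸ Sym2.mem_mk_left u v
  have hve : v ∈ (e : Sym2 V) := he ▸ Sym2.mem_mk_right u v
  by_cases hu : ∀ f : G.edgeSet, f ≠ e → u ∈ (f : Sym2 V) → ¬(φ f = a ∨ φ f = b)
  · exact exists_kempeEquiv_restrictColoring_eq_of_isolated hue hu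
  by_cases hv : ∀ f : G.edgeSet, f ≠ e → v ∈ (f : Sym2 V) → ¬(φ f = a ∨ φ f = b)
  · exact exists_kempeEquiv_restrictColoring_eq_of_isolated hve hv
  -- Both ends of `e` meet a second `(a, b)`-edge: the degree bound leaves a colour `d` missing at
  -- both ends, and after recolouring `e` with `d` we are in the case `φ e ∉ {a, b}`.
  push Not at hu hv
  obtain ⟨fu, hfu, hufu, hcu⟩ := hu
  obtain ⟨fv, hfv, hvfv, hcv⟩ := hv
  have hsubu := pair_subset_colorsAt hφ hfu hufu hue hcu hea
  have hsubv := pair_subset_colorsAt hφ hfv hvfv hve hcv hea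
  obtain ⟨d, hdu, hdv⟩ := exists_notMem_colorsAt hab hsubu hsubv hdeg
  have hd : ∀ x ∈ (e : Sym2 V), d ∉ colorsAt G φ x := by
    intro x hx
    rw [he, Sym2.mem_iff] at hx
    rcases hx with rfl | rfl
    exacts [hdu, hdv]
  have hda : Function.update φ e d e ≠ a := by
    rw [Function.update_self]
    exact fun h => hdu (h ▸ hsubu (Set.mem_insert a _))
  have hdb : Function.update φ e d e ≠ b := by
    rw [Function.update_self]
    exact fun h => hdu (h ▸ hsubu (Set.mem_insert_of_mem a rfl))
  have hrecolour : KempeChange G k φ (Function.update φ e d) :=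
    kempeChange_of_forall_ne_eq hφ (hφ.update hd) e fun f hf => (Function.update_of_ne hf _ _).symm
  refine ⟨kempeSwap G (Function.update φ e d) a b w,
    (Relation.ReflTransGen.single hrecolour).tail kempeChange_kempeSwap, ?_⟩
  rw [restrictColoring_kempeSwap_deleteEdges_of_ne hda hdb, restrictColoring_deleteEdges_update]

lemma exists_kempeEquiv_restrictColoring_eq {u v : V} [Fintype (G.neighborSet u)]
    [Fintype (G.neighborSet v)] (hφ : IsProperEdgeColoring G k φ) (he : (e : Sym2 V) = s(u, v))
    (hdeg : G.degree u + G.degree v ≤ k + 1) {c : (G.deleteEdges {(e : Sym2 V)}).edgeSet → Fin k}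
    (h : KempeEquiv _ k (restrictColoring (G.deleteEdges_le {(e : Sym2 V)}) φ) c) :
    ∃ φ', KempeEquiv G k φ φ' ∧ restrictColoring (G.deleteEdges_le {(e : Sym2 V)}) φ' = c := by
  induction h with
  | refl => exact ⟨φ, .refl, rfl⟩
  | tail _ hstep ih =>
    obtain ⟨φ₁, h₁, rfl⟩ := ih
    obtain ⟨a, b, w, rfl⟩ := hstep.exists_eq_kempeSwap
    obtain ⟨φ₂, h₂, hres⟩ :=
      exists_kempeEquiv_restrictColoring_eq_kempeSwap (a := a) (b := b) (w := w)
        (hφ.of_kempeEquiv h₁) he hdeg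
    exact ⟨φ₂, h₁.trans h₂, hres⟩

end Lift

section Main

variable {V : Type*} [Fintype V]

lemma SimpleGraph.exists_reachable_degree_le_deleteEdges [DecidableEq V] {G : SimpleGraph V}
    [DecidableRel G.Adj] {u v : V} {n : ℕ}
    (hΔ : ∀ x, G.degree x ≤ n + 1) (hlow : ∀ x, ∃ z, G.Reachable x z ∧ G.degree z ≤ n)
    (huv : G.Adj u v) (x : V) :
    ∃ z, (G.deleteEdges {s(u, v)}).Reachable x z ∧ (G.deleteEdges {s(u, v)}).degree z ≤ n := by
  obtain ⟨z, hxz, hz⟩ := hlow x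
  rcases hxz.deleteEdges_or (u := u) (v := v) with h | h | h
  · exact ⟨z, h, (degree_le_of_le (deleteEdges_le _)).trans hz⟩
  · exact ⟨u, h, Nat.lt_succ_iff.1 ((degree_deleteEdges_lt {s(u, v)} huv rfl).trans_le (hΔ u))⟩
  · exact ⟨v, h, Nat.lt_succ_iff.1
      ((degree_deleteEdges_lt {s(u, v)} huv.symm Sym2.eq_swap).trans_le (hΔ v))⟩

theorem kempeEquiv_four_of_forall_reachable_degree_le_two (G : SimpleGraph V)
    [hG : DecidableRel G.Adj]
    (hΔ : ∀ x, G.degree x ≤ 3) (hlow : ∀ x, ∃ z, G.Reachable x z ∧ G.degree z ≤ 2)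
    {φ ψ : G.edgeSet → Fin 4} (hφ : IsProperEdgeColoring G 4 φ)
    (hψ : IsProperEdgeColoring G 4 ψ) : KempeEquiv G 4 φ ψ := by
  induction G using WellFoundedLT.induction generalizing hG with
  | _ G ih =>
  classical
  by_cases hE : G.edgeSet = ∅
  · obtain rfl : φ = ψ := funext fun f => (Set.eq_empty_iff_forall_notMem.1 hE _ f.2).elim
    exact .refl
  obtain ⟨x, y, hxy⟩ : ∃ x y, G.Adj x y := by
    obtain ⟨e, he⟩ := Set.nonempty_iff_ne_empty.2 hE
    induction e using Sym2.ind with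
    | _ x y => exact ⟨x, y, he⟩
  obtain ⟨z, hxz, hz⟩ := hlow x
  obtain ⟨u, hzu⟩ := hxz.exists_adj_of_adj hxy
  set e : G.edgeSet := ⟨s(u, z), hzu.symm⟩
  have hlt : G.deleteEdges {s(u, z)} < G := lt_of_le_of_ne (deleteEdges_le _) fun h =>
    Set.disjoint_singleton_right.1 (deleteEdges_eq_self.1 h) hzu.symm
  have hIH := ih _ hlt (fun x => (degree_le_of_le (deleteEdges_le _)).trans (hΔ x))
    (exists_reachable_degree_le_deleteEdges hΔ hlow hzu.symm)
    (isProperEdgeColoring_restrictColoring (deleteEdges_le _) hφ)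
    (isProperEdgeColoring_restrictColoring (deleteEdges_le _) hψ)
  obtain ⟨φ', hφφ', hres⟩ := exists_kempeEquiv_restrictColoring_eq hφ (e := e) rfl
    (by linarith [hΔ u]) hIH
  refine hφφ'.tail (kempeChange_of_forall_ne_eq (hφ.of_kempeEquiv hφφ') hψ e fun f hf =>
    eq_of_restrictColoring_deleteEdges_eq hres hf)

end Main

/-- **Lemma (non-regular subcubic).** If `G` is a connected simple graph with maximum
degree at most 3 having a vertex of degree at most two, then all proper
4-edge-colourings of `G` are Kempe equivalent, i.e. `κ_E(G, 4) = 1`. -/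
theorem kempe_equiv_four_of_subcubic_nonregular {V : Type*} [Fintype V]
    (G : SimpleGraph V) [DecidableRel G.Adj] (hconn : G.Connected)
    (hΔ : ∀ u : V, G.degree u ≤ 3) (v : V) (hv : G.degree v ≤ 2)
    (φ ψ : G.edgeSet → Fin 4)
    (hφ : IsProperEdgeColoring G 4 φ) (hψ : IsProperEdgeColoring G 4 ψ) :
    KempeEquiv G 4 φ ψ :=
  kempeEquiv_four_of_forall_reachable_degree_le_two G hΔ
    (fun x => ⟨v, hconn.preconnected x v, hv⟩) hφ hψ
end
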